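/- If a vertex is always supported throughout the iterated-renormalization sequence, then the sequence of weights assigned to it is monotonically nondecreasing and bounded above by 1, hence converges. -/

import Mathlib

/-- An abstract rooted tree: every vertex has a parent (the root is its own
parent), a depth (distance to the root), every vertex is connected to the
root, and each depth level is finite (finitely-branching). -/
structure RTree (V : Type) where
  root : V
  parent : V → V
  depth : V → ℕ
  parent_root : parent root = root
  depth_root : depth root = 0
  depth_parent : ∀ v : V, v ≠ root → depth (parent v) + 1 = depth v
  ancestor_root : ∀ v : V, parent^[depth v] v = root
  level_finite : ∀ d : ℕ, {v : V | depth v = d}.Finite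

namespace RTree

variable {V : Type}

/-- The children of a vertex. -/
def children (T : RTree V) (v : V) : Set V :=
  {u : V | T.parent u = v ∧ u ≠ T.root}

/-- The descendants of `v` that lie `e` levels below `v`. -/
def descAt (T : RTree V) (e : ℕ) (v : V) : Set V :=
  {u : V | T.parent^[e] u = v ∧ T.depth u = T.depth v + e}

end RTree

/-- A coherent weight function (a Hintikka tree): the root gets weight 1 and
the weight of each vertex is the sum of the weights of its children. -/
def Coherent {V : Type} (T : RTree V) (h : V → ℝ) : Prop :=
  h T.root = 1 ∧ ∀ v : V, h v = ∑ᶠ u ∈ T.children v, h u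
open scoped Classical

/-- `u` is an ancestor of (or equal to) `v`. -/
def AncOrEq {V : Type} (T : RTree V) (u v : V) : Prop :=
  ∃ k : ℕ, T.parent^[k] v = u ∧ T.depth v = T.depth u + k

/-- `u` is a proper descendant of `ρ`. -/
def ProperDesc {V : Type} (T : RTree V) (ρ u : V) : Prop :=
  ∃ j : ℕ, 0 < j ∧ T.parent^[j] u = ρ ∧ T.depth u = T.depth ρ + j

/-- `u` is supported (relative to weights `h`, target depth `D`, and the
refuted depth-`D` vertex `w`): there is a chain from `u` down to some
depth-`D` vertex `v ≠ w` along which `h` is positive (for vertices deeper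
than `D`, we require the ancestor at depth `D` to avoid `w` and to carry
positive weight). -/
def Supported {V : Type} (T : RTree V) (h : V → ℝ) (D : ℕ) (w : V) (u : V) : Prop :=
  if T.depth u ≤ D then
    ∃ v : V, T.depth v = D ∧ v ≠ w ∧ T.parent^[D - T.depth u] v = u ∧
      ∀ k : ℕ, k ≤ D - T.depth u → 0 < h (T.parent^[k] v)
  else
    T.parent^[T.depth u - D] u ≠ w ∧ 0 < h (T.parent^[T.depth u - D] u)

/-- The total renormalization constant: sum of `h` over the children of `ρ`. -/
noncomputable def Ztot {V : Type} (T : RTree V) (h : V → ℝ) (ρ : V) : ℝ :=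
  ∑ᶠ u ∈ T.children ρ, h u

/-- The positive renormalization constant: sum of `h` over the supported
children of `ρ`. -/
noncomputable def Zplus {V : Type} (T : RTree V) (h : V → ℝ) (D : ℕ) (w ρ : V) : ℝ :=
  ∑ᶠ u ∈ T.children ρ ∩ {u : V | Supported T h D w u}, h u

/-- Renormalization of `h` refuting the depth-`D` vertex `w`, with
redistribution point `ρ`: zero the unsupported descendants of `ρ`, rescale
the supported descendants of `ρ` by `Z/Z⁺`, and leave everything else
unchanged. -/
noncomputable def renorm {V : Type} (T : RTree V) (h : V → ℝ) (D : ℕ) (w ρ : V) : V → ℝ :=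
  fun u =>
    if ProperDesc T ρ u then
      if Supported T h D w u then (Ztot T h ρ / Zplus T h D w ρ) * h u else 0
    else h u

/-- `ρ` is the redistribution point for refuting the depth-`D` vertex `w`:
it is the deepest ancestor of `w` having a supported child. -/
def IsRedistPoint {V : Type} (T : RTree V) (h : V → ℝ) (D : ℕ) (w ρ : V) : Prop :=
  AncOrEq T ρ w ∧ (∃ c ∈ T.children ρ, Supported T h D w c) ∧
    ∀ u : V, AncOrEq T u w → T.depth ρ < T.depth u →
      ∀ c ∈ T.children u, ¬ Supported T h D w c

/-! Renormalization never lowers a weight except to zero: unsupported descendants of the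
redistribution point are zeroed and supported ones are scaled by `Z / Z⁺ ≥ 1`. A vertex whose
weight never vanishes is therefore scaled up at every step. Coherence makes the weights on each
level sum to `1`, so each weight is at most `1`, and a bounded monotone sequence converges. -/

namespace RTree

variable {V : Type} (T : RTree V)

lemma depth_parent_of_depth_eq_succ {u : V} {d : ℕ} (hu : T.depth u = d + 1) :
    T.depth (T.parent u) = d := by
  have hroot : u ≠ T.root := fun h => by simp [h, T.depth_root] at hu
  have := T.depth_parent u hroot
  omega

lemma mem_children_iff {u v : V} :
    u ∈ T.children v ↔ T.depth u = T.depth v + 1 ∧ T.parent u = v := by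
  constructor
  · rintro ⟨rfl, hroot⟩
    exact ⟨(T.depth_parent u hroot).symm, rfl⟩
  · rintro ⟨hd, hp⟩
    exact ⟨hp, fun h => by simp [h, T.depth_root] at hd⟩

noncomputable def level (d : ℕ) : Finset V :=
  (T.level_finite d).toFinset

@[simp]
lemma mem_level {u : V} {d : ℕ} : u ∈ T.level d ↔ T.depth u = d := by
  simp [level]

lemma level_zero : T.level 0 = {T.root} := by
  ext u
  simp only [mem_level, Finset.mem_singleton]
  constructor
  · intro hu
    simpa [hu] using T.ancestor_root u
  · rintro rfl
    exact T.depth_root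

lemma children_eq_filter_level (v : V) :
    T.children v = ↑((T.level (T.depth v + 1)).filter (T.parent · = v)) := by
  ext u
  simp [mem_children_iff]

lemma children_finite (v : V) : (T.children v).Finite := by
  rw [children_eq_filter_level]
  exact Finset.finite_toSet _

lemma descAt_zero (v : V) : T.descAt 0 v = {v} := by
  ext u
  simp +contextual [descAt]

end RTree

namespace Coherent

variable {V : Type} {T : RTree V} {h : V → ℝ}

lemma sum_level (hh : Coherent T h) (d : ℕ) : ∑ u ∈ T.level d, h u = 1 := by
  induction d with
  | zero => simp [T.level_zero, hh.1]
  | succ d ih =>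
    rw [← ih, ← Finset.sum_fiberwise_of_maps_to (g := T.parent) (t := T.level d)
      fun u hu => by simpa using T.depth_parent_of_depth_eq_succ (by simpa using hu)]
    refine Finset.sum_congr rfl fun v hv => ?_
    rw [hh.2 v, T.children_eq_filter_level, finsum_mem_coe_finset, (T.mem_level).1 hv]

lemma le_one (hh : Coherent T h) (hnn : ∀ u, 0 ≤ h u) (v : V) : h v ≤ 1 := by
  rw [← hh.sum_level (T.depth v)]
  exact Finset.single_le_sum (fun u _ => hnn u) (by simp)

end Coherent

section Renormalization

variable {V : Type} {T : RTree V} {h : V → ℝ} {D : ℕ} {w ρ : V}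

lemma Zplus_le_Ztot (hnn : ∀ u, 0 ≤ h u) : Zplus T h D w ρ ≤ Ztot T h ρ := by
  have hfin := T.children_finite ρ
  rw [Zplus, Ztot, finsum_mem_eq_finite_toFinset_sum _ hfin,
    finsum_mem_eq_finite_toFinset_sum _ (hfin.subset Set.inter_subset_left)]
  exact Finset.sum_le_sum_of_subset_of_nonneg
    (Set.Finite.toFinset_subset_toFinset.2 Set.inter_subset_left) fun u _ _ => hnn u

lemma le_renorm_of_ne_zero (hnn : ∀ u, 0 ≤ h u) (hZ : 0 < Zplus T h D w ρ) {u : V}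
    (hu : renorm T h D w ρ u ≠ 0) : h u ≤ renorm T h D w ρ u := by
  unfold renorm at hu ⊢
  split_ifs at hu ⊢
  · exact le_mul_of_one_le_left (hnn u) ((one_le_div hZ).2 (Zplus_le_Ztot hnn))
  · exact absurd rfl hu
  · exact le_rfl

end Renormalization

/-- If a vertex is always supported throughout the iterated-renormalization
sequence (at no stage do all of its descendants at some depth carry zero
weight), then the sequence of weights assigned to it is monotonically
nondecreasing and bounded above by 1, hence converges. -/
theorem stmt8 {V : Type} (T : RTree V) (H : ℕ → V → ℝ)
    (hcoh : ∀ n : ℕ, Coherent T (H n)) (hnn : ∀ (n : ℕ) (v : V), 0 ≤ H n v)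
    (hstep : ∀ n : ℕ, H (n + 1) = H n ∨
      ∃ (D : ℕ) (w ρ : V), T.depth w = D ∧ IsRedistPoint T (H n) D w ρ ∧
        0 < Zplus T (H n) D w ρ ∧ H (n + 1) = renorm T (H n) D w ρ)
    (v : V)
    (hsupp : ∀ E e : ℕ, ∃ u ∈ T.descAt e v, H E u ≠ 0) :
    Monotone (fun n : ℕ => H n v) ∧ (∀ n : ℕ, H n v ≤ 1) ∧
      ∃ L : ℝ, Filter.Tendsto (fun n : ℕ => H n v) Filter.atTop (nhds L) := by
  have hne : ∀ n, H n v ≠ 0 := fun n => by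
    obtain ⟨u, hu, hHu⟩ := hsupp n 0
    rwa [T.descAt_zero, Set.mem_singleton_iff.1 hu] at *
  have hmono : Monotone (fun n : ℕ => H n v) := by
    refine monotone_nat_of_le_succ fun n => ?_
    rcases hstep n with heq | ⟨D, w, ρ, -, -, hZ, heq⟩
    · rw [heq]
    · have hne' := hne (n + 1)
      rw [heq] at hne' ⊢
      exact le_renorm_of_ne_zero (hnn n) hZ hne'
  have hle : ∀ n, H n v ≤ 1 := fun n => (hcoh n).le_one (hnn n) v
  exact ⟨hmono, hle, _, tendsto_atTop_ciSup hmono ⟨1, Set.forall_mem_range.2 hle⟩⟩
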